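/- For n ≥ 1, the number of permutations of {1,...,n} that can be written as x A n B, where x is the first entry, every value of {x+1,...,n-1} lies in A, and every value of {1,...,x-1} lies in B, equals ∑_{i=1}^{n-1} (n-1-i)!·(i-1)!, where i = x. -/

import Mathlib

open Finset Equiv

def bf (n i : ℕ) (hn : 2 ≤ n) (hi1 : 1 ≤ i) (hi2 : i ≤ n - 1)
    (σ : Equiv.Perm (Fin (n - 1 - i))) (τ : Equiv.Perm (Fin (i - 1))) (p : Fin n) : Fin n :=
  if h0 : p.val = 0 then ⟨i - 1, by omega⟩
  else if h2 : p.val < n - i then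
    ⟨i + (σ ⟨p.val - 1, by omega⟩).val, by have := (σ ⟨p.val - 1, by omega⟩).isLt; omega⟩
  else if h3 : p.val = n - i then ⟨n - 1, by omega⟩
  else ⟨(τ ⟨p.val - (n - i + 1), by have := p.isLt; omega⟩).val,
    by have := (τ ⟨p.val - (n - i + 1), by have := p.isLt; omega⟩).isLt; omega⟩

lemma bf_inj (n i : ℕ) (hn : 2 ≤ n) (hi1 : 1 ≤ i) (hi2 : i ≤ n - 1)
    (σ : Equiv.Perm (Fin (n - 1 - i))) (τ : Equiv.Perm (Fin (i - 1))) :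
    Function.Injective (bf n i hn hi1 hi2 σ τ) := by
  intro p q h
  unfold bf at h
  have hp := p.isLt
  have hq := q.isLt
  split_ifs at h with a1 a2 a3 a4 a5 a6 a7 a8 a9 a10 a11 a12 a13 a14 a15 <;>
    simp only [Fin.mk.injEq] at h <;>
    apply Fin.ext <;> try omega
  · have h1 := σ.injective (Fin.ext (Nat.add_left_cancel h))
    rw [Fin.mk.injEq] at h1
    omega
  · have h1 := τ.injective (Fin.ext h)
    rw [Fin.mk.injEq] at h1
    omega

noncomputable def bp (n i : ℕ) (hn : 2 ≤ n) (hi1 : 1 ≤ i) (hi2 : i ≤ n - 1)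
    (σ : Equiv.Perm (Fin (n - 1 - i))) (τ : Equiv.Perm (Fin (i - 1))) : Equiv.Perm (Fin n) :=
  Equiv.ofBijective _ (Finite.injective_iff_bijective.mp (bf_inj n i hn hi1 hi2 σ τ))

lemma bp_apply (n i : ℕ) (hn : 2 ≤ n) (hi1 : 1 ≤ i) (hi2 : i ≤ n - 1)
    (σ : Equiv.Perm (Fin (n - 1 - i))) (τ : Equiv.Perm (Fin (i - 1))) (p : Fin n) :
    bp n i hn hi1 hi2 σ τ p = bf n i hn hi1 hi2 σ τ p := rfl

lemma bp_zero (n i : ℕ) (hn : 2 ≤ n) (hi1 : 1 ≤ i) (hi2 : i ≤ n - 1)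
    (σ : Equiv.Perm (Fin (n - 1 - i))) (τ : Equiv.Perm (Fin (i - 1))) (h0 : (0:ℕ) < n) :
    bp n i hn hi1 hi2 σ τ ⟨0, h0⟩ = ⟨i - 1, by omega⟩ := by
  rw [bp_apply]; unfold bf; rw [dif_pos rfl]

lemma bp_last (n i : ℕ) (hn : 2 ≤ n) (hi1 : 1 ≤ i) (hi2 : i ≤ n - 1)
    (σ : Equiv.Perm (Fin (n - 1 - i))) (τ : Equiv.Perm (Fin (i - 1))) (h0 : n - i < n) :
    bp n i hn hi1 hi2 σ τ ⟨n - i, h0⟩ = ⟨n - 1, by omega⟩ := by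
  rw [bp_apply]; unfold bf
  rw [dif_neg (by simp only [Fin.val_mk]; omega), dif_neg (by simp only [Fin.val_mk]; omega),
    dif_pos rfl]

lemma bp_symm_last (n i : ℕ) (hn : 2 ≤ n) (hi1 : 1 ≤ i) (hi2 : i ≤ n - 1)
    (σ : Equiv.Perm (Fin (n - 1 - i))) (τ : Equiv.Perm (Fin (i - 1))) (hl : n - 1 < n) :
    (bp n i hn hi1 hi2 σ τ).symm ⟨n - 1, hl⟩ = ⟨n - i, by omega⟩ := by
  rw [Equiv.symm_apply_eq, bp_last]

lemma bp_mem (n i : ℕ) (hn : 2 ≤ n) (hi1 : 1 ≤ i) (hi2 : i ≤ n - 1)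
    (σ : Equiv.Perm (Fin (n - 1 - i))) (τ : Equiv.Perm (Fin (i - 1)))
    (hz : (0:ℕ) < n) (hl : n - 1 < n) :
    bp n i hn hi1 hi2 σ τ ⟨0, hz⟩ ≠ ⟨n - 1, hl⟩ ∧
    (∀ v : Fin n, bp n i hn hi1 hi2 σ τ ⟨0, hz⟩ < v → v ≠ ⟨n - 1, hl⟩ →
      (bp n i hn hi1 hi2 σ τ).symm v < (bp n i hn hi1 hi2 σ τ).symm ⟨n - 1, hl⟩) ∧
    (∀ v : Fin n, v < bp n i hn hi1 hi2 σ τ ⟨0, hz⟩ →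
      (bp n i hn hi1 hi2 σ τ).symm ⟨n - 1, hl⟩ < (bp n i hn hi1 hi2 σ τ).symm v) := by
  have h0 := bp_zero n i hn hi1 hi2 σ τ hz
  have hsymm := bp_symm_last n i hn hi1 hi2 σ τ hl
  refine ⟨?_, ?_, ?_⟩
  · rw [h0]
    intro hbad
    have := congrArg Fin.val hbad
    simp only [Fin.val_mk] at this
    omega
  · intro v hv hne
    rw [h0] at hv; rw [Fin.lt_def] at hv; simp only [Fin.val_mk] at hv
    rw [hsymm]; rw [Fin.lt_def]; simp only [Fin.val_mk]
    set p := (bp n i hn hi1 hi2 σ τ).symm v with hpdef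
    have hpv : bp n i hn hi1 hi2 σ τ p = v := Equiv.apply_symm_apply _ v
    rw [bp_apply] at hpv; unfold bf at hpv
    split_ifs at hpv with b1 b2 b3
    · exfalso; have := congrArg Fin.val hpv; simp only [Fin.val_mk] at this; omega
    · exact b2
    · exact absurd hpv.symm hne
    · exfalso
      have hvval := congrArg Fin.val hpv
      simp only [Fin.val_mk] at hvval
      have hlt := (τ ⟨p.val - (n - i + 1), by have := p.isLt; omega⟩).isLt
      omega
  · intro v hv
    rw [h0] at hv; rw [Fin.lt_def] at hv; simp only [Fin.val_mk] at hv
    rw [hsymm]; rw [Fin.lt_def]; simp only [Fin.val_mk]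
    set p := (bp n i hn hi1 hi2 σ τ).symm v with hpdef
    have hpv : bp n i hn hi1 hi2 σ τ p = v := Equiv.apply_symm_apply _ v
    rw [bp_apply] at hpv; unfold bf at hpv
    split_ifs at hpv with b1 b2 b3
    · exfalso; have := congrArg Fin.val hpv; simp only [Fin.val_mk] at this; omega
    · exfalso
      have hvv := congrArg Fin.val hpv
      simp only [Fin.val_mk] at hvv
      omega
    · exfalso; have := congrArg Fin.val hpv; simp only [Fin.val_mk] at this; omega
    · omega

set_option maxHeartbeats 2000000 in
lemma struct (n : ℕ) (hn : 2 ≤ n) (hz : (0:ℕ) < n) (hl : n - 1 < n) (π : Equiv.Perm (Fin n))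
    (h1 : π ⟨0, hz⟩ ≠ ⟨n - 1, hl⟩)
    (h2 : ∀ v : Fin n, π ⟨0, hz⟩ < v → v ≠ ⟨n - 1, hl⟩ → π.symm v < π.symm ⟨n - 1, hl⟩)
    (h3 : ∀ v : Fin n, v < π ⟨0, hz⟩ → π.symm ⟨n - 1, hl⟩ < π.symm v) :
    ∃ (i : ℕ) (hi1 : 1 ≤ i) (hi2 : i ≤ n - 1) (σ : Equiv.Perm (Fin (n - 1 - i)))
      (τ : Equiv.Perm (Fin (i - 1))), bp n i hn hi1 hi2 σ τ = π := by
  set a := (π ⟨0, hz⟩).val with hadef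
  have ha2 : a ≤ n - 2 := by
    have h := (π ⟨0, hz⟩).isLt
    have hne : a ≠ n - 1 := fun hh => h1 (Fin.ext hh)
    omega
  set L := π.symm ⟨n - 1, hl⟩ with hLdef
  have hπL : π L = ⟨n - 1, hl⟩ := π.apply_symm_apply _
  have hL0 : L.val ≠ 0 := by
    intro hh
    have hLz : L = ⟨0, hz⟩ := Fin.ext hh
    exact h1 (by rw [← hLz]; exact hπL)
  have key : (Finset.univ.filter fun v : Fin n => π.symm v < L)
      = insert (π ⟨0, hz⟩) (Finset.Ioo (π ⟨0, hz⟩) ⟨n - 1, hl⟩) := by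
    ext v
    simp only [Finset.mem_filter, Finset.mem_univ, true_and, Finset.mem_insert, Finset.mem_Ioo]
    constructor
    · intro hv
      by_cases hva : v = π ⟨0, hz⟩
      · exact Or.inl hva
      right
      have hvlast : v ≠ ⟨n - 1, hl⟩ := by
        intro hh; rw [hh, ← hLdef] at hv; exact lt_irrefl _ hv
      constructor
      · rcases lt_trichotomy (π ⟨0, hz⟩) v with h | h | h
        · exact h
        · exact absurd h.symm hva
        · exact absurd (h3 v h) (not_lt.mpr (le_of_lt hv))
      · rw [Fin.lt_def]; simp only [Fin.val_mk]
        have hvn := v.isLt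
        have : v.val ≠ n - 1 := fun hh => hvlast (Fin.ext hh)
        omega
    · rintro (rfl | ⟨hv1, hv2⟩)
      · rw [Equiv.symm_apply_apply, Fin.lt_def]; simp only [Fin.val_mk]; omega
      · exact h2 v hv1 (ne_of_lt hv2)
  have c1 : (Finset.univ.filter fun v : Fin n => π.symm v < L).card = L.val := by
    have himg : (Finset.univ.filter fun v : Fin n => π.symm v < L)
        = Finset.image π (Finset.Iio L) := by
      ext v
      simp only [Finset.mem_filter, Finset.mem_univ, true_and, Finset.mem_image, Finset.mem_Iio]
      constructor
      · intro hv; exact ⟨π.symm v, hv, π.apply_symm_apply v⟩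
      · rintro ⟨p, hp, rfl⟩; rwa [Equiv.symm_apply_apply]
    rw [himg, Finset.card_image_of_injective _ π.injective, Fin.card_Iio]
  have c2 : (insert (π ⟨0, hz⟩) (Finset.Ioo (π ⟨0, hz⟩) ⟨n - 1, hl⟩)).card = n - 1 - a := by
    rw [Finset.card_insert_of_notMem (by simp [Finset.mem_Ioo]), Fin.card_Ioo]
    simp only [Fin.val_mk]
    omega
  have hLv : L.val = n - 1 - a := by rw [← c1, key, c2]
  have hmid : ∀ p : Fin n, p.val ≠ 0 → p.val < n - 1 - a →
      a + 1 ≤ (π p).val ∧ (π p).val ≤ n - 2 := by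
    intro p hp0 hplt
    have hpl := (π p).isLt
    have hne_last : (π p).val ≠ n - 1 := by
      intro hh
      have hpL : p = L := by
        rw [hLdef]
        exact (Equiv.eq_symm_apply _).mpr (Fin.ext hh)
      rw [hpL] at hplt; omega
    have hne0 : (π p).val ≠ a := by
      intro hh
      have hpp : π p = π ⟨0, hz⟩ := Fin.ext (by omega)
      have := congrArg Fin.val (π.injective hpp)
      simp only [Fin.val_mk] at this
      exact hp0 this
    have hge : ¬ ((π p).val < a) := by
      intro hh
      have hlt : π p < π ⟨0, hz⟩ := by rw [Fin.lt_def]; omega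
      have hL2 := h3 (π p) hlt
      rw [Equiv.symm_apply_apply] at hL2; rw [Fin.lt_def] at hL2
      omega
    omega
  have htail : ∀ p : Fin n, n - 1 - a < p.val → (π p).val < a := by
    intro p hplt
    have hpn := p.isLt
    have hpl := (π p).isLt
    have hne_last : (π p).val ≠ n - 1 := by
      intro hh
      have hpL : p = L := by
        rw [hLdef]
        exact (Equiv.eq_symm_apply _).mpr (Fin.ext hh)
      rw [hpL] at hplt; omega
    have hp0 : p.val ≠ 0 := by omega
    have hne0 : (π p).val ≠ a := by
      intro hh
      have hpp : π p = π ⟨0, hz⟩ := Fin.ext (by omega)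
      have := congrArg Fin.val (π.injective hpp)
      simp only [Fin.val_mk] at this
      exact hp0 this
    by_contra hh
    push_neg at hh
    have hgt : π ⟨0, hz⟩ < π p := by rw [Fin.lt_def]; omega
    have hL2 := h2 (π p) hgt (fun he => hne_last (congrArg Fin.val he))
    rw [Equiv.symm_apply_apply] at hL2; rw [Fin.lt_def] at hL2
    omega
  clear_value a L
  refine ⟨a + 1, by omega, by omega, ?_⟩
  have hexσ : ∃ f : Fin (n - 1 - (a + 1)) → Fin (n - 1 - (a + 1)),
      ∀ k, ∀ hk : k.val + 1 < n, (f k).val = (π ⟨k.val + 1, hk⟩).val - (a + 1) := by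
    refine ⟨fun k => ⟨(π ⟨k.val + 1, by omega⟩).val - (a + 1), ?_⟩, fun k hk => rfl⟩
    have hk := k.isLt
    have := hmid ⟨k.val + 1, by omega⟩ (by simp only [Fin.val_mk]; omega)
      (by simp only [Fin.val_mk]; omega)
    omega
  obtain ⟨σ0, hσ0⟩ := hexσ
  have hσinj : Function.Injective σ0 := by
    intro k l hkl
    have hk := k.isLt; have hl' := l.isLt
    have e1 := hσ0 k (by omega); have e2 := hσ0 l (by omega)
    have hmk := hmid ⟨k.val + 1, by omega⟩ (by simp only [Fin.val_mk]; omega)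
      (by simp only [Fin.val_mk]; omega)
    have hml := hmid ⟨l.val + 1, by omega⟩ (by simp only [Fin.val_mk]; omega)
      (by simp only [Fin.val_mk]; omega)
    have hveq := congrArg Fin.val hkl
    have hv : (π ⟨k.val + 1, by omega⟩).val = (π ⟨l.val + 1, by omega⟩).val := by omega
    have hind := congrArg Fin.val (π.injective (Fin.ext hv))
    simp only [Fin.val_mk] at hind
    exact Fin.ext (by omega)
  have hexτ : ∃ f : Fin (a + 1 - 1) → Fin (a + 1 - 1),
      ∀ k, ∀ hk : n - (a + 1) + 1 + k.val < n, (f k).val = (π ⟨n - (a + 1) + 1 + k.val, hk⟩).val := by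
    refine ⟨fun k => ⟨(π ⟨n - (a + 1) + 1 + k.val, by omega⟩).val, ?_⟩, fun k hk => rfl⟩
    have hk := k.isLt
    have := htail ⟨n - (a + 1) + 1 + k.val, by omega⟩ (by simp only [Fin.val_mk]; omega)
    omega
  obtain ⟨τ0, hτ0⟩ := hexτ
  have hτinj : Function.Injective τ0 := by
    intro k l hkl
    have hk := k.isLt; have hl' := l.isLt
    have e1 := hτ0 k (by omega); have e2 := hτ0 l (by omega)
    have hveq := congrArg Fin.val hkl
    have hv : (π ⟨n - (a + 1) + 1 + k.val, by omega⟩).val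
        = (π ⟨n - (a + 1) + 1 + l.val, by omega⟩).val := by omega
    have hind := congrArg Fin.val (π.injective (Fin.ext hv))
    simp only [Fin.val_mk] at hind
    exact Fin.ext (by omega)
  have hσbij := Finite.injective_iff_bijective.mp hσinj
  have hτbij := Finite.injective_iff_bijective.mp hτinj
  refine ⟨Equiv.ofBijective σ0 hσbij, Equiv.ofBijective τ0 hτbij, ?_⟩
  apply Equiv.ext; intro p
  rw [bp_apply]; unfold bf
  have hpn := p.isLt
  split_ifs with b1 b2 b3
  · have hp : p = ⟨0, hz⟩ := Fin.ext b1
    rw [hp]; exact Fin.ext (by simp only [Fin.val_mk]; omega)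
  · apply Fin.ext
    simp only [Fin.val_mk]
    have heq : ((Equiv.ofBijective σ0 hσbij) (⟨p.val - 1, by omega⟩ : Fin (n - 1 - (a + 1)))).val
        = (π ⟨p.val - 1 + 1, by omega⟩).val - (a + 1) :=
      hσ0 ⟨p.val - 1, by omega⟩ (by simp only [Fin.val_mk]; omega)
    have hmk2 := hmid ⟨p.val - 1 + 1, by omega⟩ (by simp only [Fin.val_mk]; omega)
      (by simp only [Fin.val_mk]; omega)
    have hpe : (π ⟨p.val - 1 + 1, by omega⟩) = π p := by
      congr 1; exact Fin.ext (by simp only [Fin.val_mk]; omega)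
    rw [hpe] at heq hmk2
    omega
  · apply Fin.ext
    simp only [Fin.val_mk]
    have hp : p = L := Fin.ext (by omega)
    have hPl : π p = ⟨n - 1, hl⟩ := by rw [hp]; exact hπL
    have hv := congrArg Fin.val hPl
    simp only [Fin.val_mk] at hv
    omega
  · apply Fin.ext
    simp only [Fin.val_mk]
    have heq : ((Equiv.ofBijective τ0 hτbij)
          (⟨p.val - (n - (a + 1) + 1), by omega⟩ : Fin (a + 1 - 1))).val
        = (π ⟨n - (a + 1) + 1 + (p.val - (n - (a + 1) + 1)), by omega⟩).val :=
      hτ0 ⟨p.val - (n - (a + 1) + 1), by omega⟩ (by simp only [Fin.val_mk]; omega)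
    have hpe : (π ⟨n - (a + 1) + 1 + (p.val - (n - (a + 1) + 1)), by omega⟩) = π p := by
      congr 1; exact Fin.ext (by simp only [Fin.val_mk]; omega)
    rw [hpe] at heq
    omega

lemma bp_mid_apply (n i : ℕ) (hn : 2 ≤ n) (hi1 : 1 ≤ i) (hi2 : i ≤ n - 1)
    (σ : Equiv.Perm (Fin (n - 1 - i))) (τ : Equiv.Perm (Fin (i - 1))) (k : ℕ) (hk : k < n - 1 - i) :
    bp n i hn hi1 hi2 σ τ ⟨k + 1, by omega⟩
      = ⟨i + (σ ⟨k, hk⟩).val, by have := (σ ⟨k, hk⟩).isLt; omega⟩ := by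
  rw [bp_apply]; unfold bf
  rw [dif_neg (by simp only [Fin.val_mk]; omega), dif_pos (by simp only [Fin.val_mk]; omega)]
  rfl

lemma bp_tail_apply (n i : ℕ) (hn : 2 ≤ n) (hi1 : 1 ≤ i) (hi2 : i ≤ n - 1)
    (σ : Equiv.Perm (Fin (n - 1 - i))) (τ : Equiv.Perm (Fin (i - 1))) (k : ℕ) (hk : k < i - 1) :
    bp n i hn hi1 hi2 σ τ ⟨n - i + 1 + k, by omega⟩
      = ⟨(τ ⟨k, hk⟩).val, by have := (τ ⟨k, hk⟩).isLt; omega⟩ := by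
  rw [bp_apply]; unfold bf
  rw [dif_neg (by simp only [Fin.val_mk]; omega), dif_neg (by simp only [Fin.val_mk]; omega),
    dif_neg (by simp only [Fin.val_mk]; omega)]
  apply Fin.ext
  simp only [Fin.val_mk]
  simp only [show n - i + 1 + k - (n - i + 1) = k from by omega]

set_option maxHeartbeats 2000000 in
lemma bp_param_inj (n : ℕ) (hn : 2 ≤ n) (i i' : ℕ) (hi1 : 1 ≤ i) (hi2 : i ≤ n - 1)
    (hi1' : 1 ≤ i') (hi2' : i' ≤ n - 1)
    (σ : Equiv.Perm (Fin (n - 1 - i))) (τ : Equiv.Perm (Fin (i - 1)))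
    (σ' : Equiv.Perm (Fin (n - 1 - i'))) (τ' : Equiv.Perm (Fin (i' - 1)))
    (h : bp n i hn hi1 hi2 σ τ = bp n i' hn hi1' hi2' σ' τ') :
    (⟨i, (σ, τ)⟩ : Σ j : ℕ, Equiv.Perm (Fin (n - 1 - j)) × Equiv.Perm (Fin (j - 1)))
      = ⟨i', (σ', τ')⟩ := by
  have hii : i = i' := by
    have h0 := congrArg (fun ρ : Equiv.Perm (Fin n) => (ρ ⟨0, by omega⟩).val) h
    rw [bp_zero n i hn hi1 hi2 σ τ (by omega), bp_zero n i' hn hi1' hi2' σ' τ' (by omega)] at h0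
    simp only [Fin.val_mk] at h0
    omega
  subst hii
  have hσ : σ = σ' := by
    apply Equiv.ext; intro k
    have hk := k.isLt
    have e1 := bp_mid_apply n i hn hi1 hi2 σ τ k.val k.isLt
    have e2 := bp_mid_apply n i hn hi1' hi2' σ' τ' k.val k.isLt
    have e3 : bp n i hn hi1 hi2 σ τ ⟨k.val + 1, by omega⟩
        = bp n i hn hi1' hi2' σ' τ' ⟨k.val + 1, by omega⟩ := by rw [h]
    have hv := congrArg Fin.val (e1.symm.trans (e3.trans e2))
    simp only [Fin.val_mk] at hv
    exact Fin.ext (Nat.add_left_cancel hv)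
  have hτ : τ = τ' := by
    apply Equiv.ext; intro k
    have hk := k.isLt
    have e1 := bp_tail_apply n i hn hi1 hi2 σ τ k.val k.isLt
    have e2 := bp_tail_apply n i hn hi1' hi2' σ' τ' k.val k.isLt
    have e3 : bp n i hn hi1 hi2 σ τ ⟨n - i + 1 + k.val, by omega⟩
        = bp n i hn hi1' hi2' σ' τ' ⟨n - i + 1 + k.val, by omega⟩ := by rw [h]
    have hv := congrArg Fin.val (e1.symm.trans (e3.trans e2))
    simp only [Fin.val_mk] at hv
    exact Fin.ext hv
  rw [hσ, hτ]

/-- For `n ≥ 1`, with `S = ∑_{i=1}^{n-1} (n-1-i)!·(i-1)!`: first,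
`n! - S + S = n!`; and more substantively, `S` equals the number of
permutations of `{1,…,n}` that can be written as `x A n B`, where `x = π₁ < n`
is the first entry, every value of `{x+1,…,n-1}` lies in `A` (strictly before
the position of `n`), and every value of `{1,…,x-1}` lies in `B` (after the
position of `n`). Here `π i` is the entry in position `i` and `π.symm v` is the
position of the value `v`. -/
theorem class1_containment_count (n : ℕ) (hn : 1 ≤ n) :
    n.factorial - (∑ i ∈ Finset.Icc 1 (n - 1), (n - 1 - i).factorial * (i - 1).factorial)
        + (∑ i ∈ Finset.Icc 1 (n - 1), (n - 1 - i).factorial * (i - 1).factorial)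
      = n.factorial ∧
    (Finset.univ.filter fun π : Equiv.Perm (Fin n) =>
        π ⟨0, by omega⟩ ≠ ⟨n - 1, by omega⟩ ∧
        (∀ v : Fin n, π ⟨0, by omega⟩ < v → v ≠ ⟨n - 1, by omega⟩ →
          π.symm v < π.symm ⟨n - 1, by omega⟩) ∧
        (∀ v : Fin n, v < π ⟨0, by omega⟩ →
          π.symm ⟨n - 1, by omega⟩ < π.symm v)).card =
      ∑ i ∈ Finset.Icc 1 (n - 1), (n - 1 - i).factorial * (i - 1).factorial := by
  have key : (Finset.univ.filter fun π : Equiv.Perm (Fin n) =>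
        π ⟨0, by omega⟩ ≠ ⟨n - 1, by omega⟩ ∧
        (∀ v : Fin n, π ⟨0, by omega⟩ < v → v ≠ ⟨n - 1, by omega⟩ →
          π.symm v < π.symm ⟨n - 1, by omega⟩) ∧
        (∀ v : Fin n, v < π ⟨0, by omega⟩ →
          π.symm ⟨n - 1, by omega⟩ < π.symm v)).card =
      ∑ i ∈ Finset.Icc 1 (n - 1), (n - 1 - i).factorial * (i - 1).factorial := by
    by_cases hn1 : n = 1
    · subst hn1
      rw [Finset.Icc_eq_empty (by omega), Finset.sum_empty,
        Finset.card_eq_zero, Finset.filter_eq_empty_iff]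
      intro π _
      exact fun h => h.1 (Subsingleton.elim _ _)
    · have hn2 : 2 ≤ n := by omega
      have hs : ((Finset.Icc 1 (n - 1)).sigma (fun j =>
            (Finset.univ : Finset (Equiv.Perm (Fin (n - 1 - j)) × Equiv.Perm (Fin (j - 1)))))).card
          = ∑ i ∈ Finset.Icc 1 (n - 1), (n - 1 - i).factorial * (i - 1).factorial := by
        rw [Finset.card_sigma]
        refine Finset.sum_congr rfl fun j _ => ?_
        simp [Finset.card_univ, Fintype.card_prod, Fintype.card_perm, Fintype.card_fin]
      rw [← hs]
      refine (Finset.card_bij (fun x hx => bp n x.1 hn2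
          (Finset.mem_Icc.mp (Finset.mem_sigma.mp hx).1).1
          (Finset.mem_Icc.mp (Finset.mem_sigma.mp hx).1).2 x.2.1 x.2.2) ?_ ?_ ?_).symm
      · intro x hx
        rw [Finset.mem_filter]
        exact ⟨Finset.mem_univ _, bp_mem n x.1 hn2 _ _ x.2.1 x.2.2 (by omega) (by omega)⟩
      · intro x hx y hy hxy
        exact bp_param_inj n hn2 x.1 y.1 _ _ _ _ x.2.1 x.2.2 y.2.1 y.2.2 hxy
      · intro π hπ
        rw [Finset.mem_filter] at hπ
        obtain ⟨-, hc1, hc2, hc3⟩ := hπ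
        obtain ⟨i, hi1, hi2, σ, τ, heq⟩ := struct n hn2 (by omega) (by omega) π hc1 hc2 hc3
        exact ⟨⟨i, (σ, τ)⟩, Finset.mem_sigma.mpr
          ⟨Finset.mem_Icc.mpr ⟨hi1, hi2⟩, Finset.mem_univ _⟩, heq⟩
  refine ⟨?_, key⟩
  have hle : (∑ i ∈ Finset.Icc 1 (n - 1), (n - 1 - i).factorial * (i - 1).factorial)
      ≤ n.factorial := by
    rw [← key]
    calc (Finset.univ.filter _).card ≤ (Finset.univ : Finset (Equiv.Perm (Fin n))).card :=
          Finset.card_filter_le _ _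
      _ = n.factorial := by
          rw [Finset.card_univ]
          simp [Fintype.card_perm, Fintype.card_fin]
  omega
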